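/- Let Y₁₁, Y₁₂, Y₂₁, Y₂₂ be i.i.d. uniform on {0,1}, W uniform on {1,2} independent of them, U₁ = Y_{1W}, U₂ = Y_{2W}. Then I(Y₁,Y₂; U₁ | U₂) = I(Y₁,Y₂; U₂ | U₁) = (3/4)·log 2. -/

import Mathlib

open Finset

/-- Shannon entropy (natural log) of a random variable `X` on a finite
probability space with weights `μ`. -/
noncomputable def ent {Ω α : Type*} [Fintype Ω] [Fintype α] [DecidableEq α]
    (μ : Ω → ℝ) (X : Ω → α) : ℝ :=
  ∑ a : α, Real.negMulLog (∑ ω ∈ univ.filter (fun ω => X ω = a), μ ω)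

/-- Conditional mutual information `I(X;Y|Z)` on a finite probability space. -/
noncomputable def condMutualInfo {Ω α β γ : Type*} [Fintype Ω] [Fintype α] [Fintype β]
    [Fintype γ] [DecidableEq α] [DecidableEq β] [DecidableEq γ]
    (μ : Ω → ℝ) (X : Ω → α) (Y : Ω → β) (Z : Ω → γ) : ℝ :=
  ent μ (fun ω => (X ω, Z ω)) + ent μ (fun ω => (Y ω, Z ω))
    - ent μ (fun ω => (X ω, Y ω, Z ω)) - ent μ Z

/-- Sample space for the toy example: `(Y₁₁, Y₁₂, Y₂₁, Y₂₂, W)`, all uniform. -/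
abbrev ToyΩ : Type := Fin 2 × Fin 2 × Fin 2 × Fin 2 × Fin 2

/-- Uniform measure on the 32-point space. -/
noncomputable def toyμ : ToyΩ → ℝ := fun _ => 1 / 32

def toyY1 (ω : ToyΩ) : Fin 2 × Fin 2 := (ω.1, ω.2.1)
def toyY2 (ω : ToyΩ) : Fin 2 × Fin 2 := (ω.2.2.1, ω.2.2.2.1)
def toyW (ω : ToyΩ) : Fin 2 := ω.2.2.2.2
/-- `U₁ = Y_{1W}`: the `W`-th coordinate of `Y₁`. -/
def toyU1 (ω : ToyΩ) : Fin 2 := if toyW ω = 0 then (toyY1 ω).1 else (toyY1 ω).2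
/-- `U₂ = Y_{2W}`: the `W`-th coordinate of `Y₂`. -/
def toyU2 (ω : ToyΩ) : Fin 2 := if toyW ω = 0 then (toyY2 ω).1 else (toyY2 ω).2

lemma log_half : Real.log (1/2 : ℝ) = -(1 * Real.log 2) := by
  rw [one_div, Real.log_inv]; ring

lemma log_quarter : Real.log (1/4 : ℝ) = -(2 * Real.log 2) := by
  rw [one_div, Real.log_inv, show (4:ℝ) = 2^2 by norm_num, Real.log_pow]; push_cast; ring

lemma log_16 : Real.log (1/16 : ℝ) = -(4 * Real.log 2) := by
  rw [one_div, Real.log_inv, show (16:ℝ) = 2^4 by norm_num, Real.log_pow]; push_cast; ring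

lemma log_32 : Real.log (1/32 : ℝ) = -(5 * Real.log 2) := by
  rw [one_div, Real.log_inv, show (32:ℝ) = 2^5 by norm_num, Real.log_pow]; push_cast; ring

set_option maxHeartbeats 4000000 in
lemma ent_U1 : ent toyμ toyU1 = Real.log 2 := by
  have h : ∀ a : Fin 2, (univ.filter (fun ω : ToyΩ => toyU1 ω = a)).card = 16 := by decide
  unfold ent
  simp only [toyμ, Finset.sum_const, nsmul_eq_mul, h, Fin.sum_univ_two]
  norm_num [Real.negMulLog]
  rw [log_half]; ring

set_option maxHeartbeats 4000000 in
lemma ent_U2 : ent toyμ toyU2 = Real.log 2 := by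
  have h : ∀ a : Fin 2, (univ.filter (fun ω : ToyΩ => toyU2 ω = a)).card = 16 := by decide
  unfold ent
  simp only [toyμ, Finset.sum_const, nsmul_eq_mul, h, Fin.sum_univ_two]
  norm_num [Real.negMulLog]
  rw [log_half]; ring

set_option maxHeartbeats 4000000 in
lemma ent_U1U2 : ent toyμ (fun ω => (toyU1 ω, toyU2 ω)) = 2 * Real.log 2 := by
  unfold ent
  simp only [Finset.sum_filter, toyμ, toyU1, toyU2, toyY1, toyY2, toyW, Fintype.sum_prod_type,
    Fin.sum_univ_two, Prod.mk.injEq]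
  norm_num [Real.negMulLog]
  rw [log_quarter]; ring

set_option maxHeartbeats 4000000 in
lemma ent_U2U1 : ent toyμ (fun ω => (toyU2 ω, toyU1 ω)) = 2 * Real.log 2 := by
  unfold ent
  simp only [Finset.sum_filter, toyμ, toyU1, toyU2, toyY1, toyY2, toyW, Fintype.sum_prod_type,
    Fin.sum_univ_two, Prod.mk.injEq]
  norm_num [Real.negMulLog]
  rw [log_quarter]; ring

set_option maxHeartbeats 8000000 in
lemma ent_XU1 : ent toyμ (fun ω => ((toyY1 ω, toyY2 ω), toyU1 ω)) = (9/2) * Real.log 2 := by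
  unfold ent
  simp only [Finset.sum_filter, toyμ, toyU1, toyU2, toyY1, toyY2, toyW, Fintype.sum_prod_type,
    Fin.sum_univ_two, Prod.mk.injEq]
  norm_num [Real.negMulLog]
  rw [log_16, log_32]; ring

set_option maxHeartbeats 8000000 in
lemma ent_XU2 : ent toyμ (fun ω => ((toyY1 ω, toyY2 ω), toyU2 ω)) = (9/2) * Real.log 2 := by
  unfold ent
  simp only [Finset.sum_filter, toyμ, toyU1, toyU2, toyY1, toyY2, toyW, Fintype.sum_prod_type,
    Fin.sum_univ_two, Prod.mk.injEq]
  norm_num [Real.negMulLog]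
  rw [log_16, log_32]; ring

set_option maxHeartbeats 16000000 in
lemma ent_XU1U2 : ent toyμ (fun ω => ((toyY1 ω, toyY2 ω), toyU1 ω, toyU2 ω))
    = (19/4) * Real.log 2 := by
  unfold ent
  simp only [Finset.sum_filter, toyμ, toyU1, toyU2, toyY1, toyY2, toyW, Fintype.sum_prod_type,
    Fin.sum_univ_two, Prod.mk.injEq]
  norm_num [Real.negMulLog]
  rw [log_16, log_32]; ring

set_option maxHeartbeats 16000000 in
lemma ent_XU2U1 : ent toyμ (fun ω => ((toyY1 ω, toyY2 ω), toyU2 ω, toyU1 ω))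
    = (19/4) * Real.log 2 := by
  unfold ent
  simp only [Finset.sum_filter, toyμ, toyU1, toyU2, toyY1, toyY2, toyW, Fintype.sum_prod_type,
    Fin.sum_univ_two, Prod.mk.injEq]
  norm_num [Real.negMulLog]
  rw [log_16, log_32]; ring

theorem stmt_11 :
    condMutualInfo toyμ (fun ω => (toyY1 ω, toyY2 ω)) toyU1 toyU2 =
      (3 / 4) * Real.log 2 ∧
    condMutualInfo toyμ (fun ω => (toyY1 ω, toyY2 ω)) toyU2 toyU1 =
      (3 / 4) * Real.log 2 := by
  unfold condMutualInfo
  rw [ent_XU2, ent_U1U2, ent_XU1U2, ent_U2, ent_XU1, ent_U2U1, ent_XU2U1, ent_U1]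
  constructor <;> ring
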